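/- Let M be a d×d symmetric positive definite real matrix, let z, v ∈ ℝ^d be nonzero, and let θ₀ ∈ [0, π/2] satisfy ⟨v, z−v⟩_M ≥ cos(θ₀)·‖v‖_M·‖z−v‖_M. Then for every t ∈ [0,1], one has ⟨v, z−t·v⟩_M ≥ cos(θ₀)·‖v‖_M·‖z−t·v‖_M. -/

import Mathlib

noncomputable def mprod {d : ℕ} (M : Matrix (Fin d) (Fin d) ℝ) (u v : Fin d → ℝ) : ℝ :=
  dotProduct u (M.mulVec v)

noncomputable def mnorm {d : ℕ} (M : Matrix (Fin d) (Fin d) ℝ) (u : Fin d → ℝ) : ℝ :=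
  Real.sqrt (mprod M u u)

lemma mprod_self_nonneg {d : ℕ} {M : Matrix (Fin d) (Fin d) ℝ} (hM : M.PosDef)
    (u : Fin d → ℝ) : 0 ≤ mprod M u u := by
  have := hM.posSemidef.re_dotProduct_nonneg u
  simpa [mprod] using this

lemma mnorm_nonneg {d : ℕ} (M : Matrix (Fin d) (Fin d) ℝ) (u : Fin d → ℝ) :
    0 ≤ mnorm M u := Real.sqrt_nonneg _

lemma mnorm_sq {d : ℕ} {M : Matrix (Fin d) (Fin d) ℝ} (hM : M.PosDef) (u : Fin d → ℝ) :
    mnorm M u ^ 2 = mprod M u u := Real.sq_sqrt (mprod_self_nonneg hM u)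

lemma mprod_comm {d : ℕ} {M : Matrix (Fin d) (Fin d) ℝ} (hMs : M.IsSymm)
    (u w : Fin d → ℝ) : mprod M u w = mprod M w u := by
  unfold mprod
  rw [Matrix.dotProduct_mulVec, ← Matrix.mulVec_transpose, hMs.eq, dotProduct_comm]

lemma mprod_add_right {d : ℕ} (M : Matrix (Fin d) (Fin d) ℝ) (u w x : Fin d → ℝ) :
    mprod M u (w + x) = mprod M u w + mprod M u x := by
  unfold mprod
  rw [Matrix.mulVec_add, dotProduct_add]

lemma mprod_smul_right {d : ℕ} (M : Matrix (Fin d) (Fin d) ℝ) (s : ℝ) (u w : Fin d → ℝ) :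
    mprod M u (s • w) = s * mprod M u w := by
  unfold mprod
  rw [Matrix.mulVec_smul, dotProduct_smul, smul_eq_mul]

lemma mprod_expand {d : ℕ} {M : Matrix (Fin d) (Fin d) ℝ} (hMs : M.IsSymm)
    (u w : Fin d → ℝ) (a b : ℝ) :
    mprod M (a • u + b • w) (a • u + b • w)
      = a ^ 2 * mprod M u u + 2 * a * b * mprod M u w + b ^ 2 * mprod M w w := by
  rw [mprod_comm hMs, mprod_add_right, mprod_smul_right, mprod_smul_right,
    mprod_comm hMs (a • u + b • w) u, mprod_comm hMs (a • u + b • w) w,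
    mprod_add_right, mprod_add_right, mprod_smul_right, mprod_smul_right,
    mprod_smul_right, mprod_smul_right, mprod_comm hMs w u]
  ring

lemma mprod_cs {d : ℕ} {M : Matrix (Fin d) (Fin d) ℝ} (hMs : M.IsSymm) (hM : M.PosDef)
    (u w : Fin d → ℝ) : mprod M u w ≤ mnorm M u * mnorm M w := by
  set a := mprod M u u
  set b := mprod M u w
  set c := mprod M w w
  have ha : 0 ≤ a := mprod_self_nonneg hM u
  have hc : 0 ≤ c := mprod_self_nonneg hM w
  have hq : ∀ x : ℝ, 0 ≤ a * x ^ 2 + (2 * b) * x + c := by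
    intro x
    have := mprod_self_nonneg hM (x • u + (1 : ℝ) • w)
    rw [mprod_expand hMs] at this
    calc (0:ℝ) ≤ x ^ 2 * a + 2 * x * 1 * b + 1 ^ 2 * c := this
      _ = a * x ^ 2 + (2 * b) * x + c := by ring
  have hbsq : b ^ 2 ≤ a * c := by
    rcases eq_or_lt_of_le ha with ha0 | ha0
    · -- a = 0, so quadratic is linear: 2bx + c ≥ 0 for all x forces b = 0
      have hb0 : b = 0 := by
        by_contra hb
        have := hq ((-c - 1) / (2 * b))
        rw [← ha0] at this
        have h2b : (2 * b) ≠ 0 := by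
          simpa using hb
        field_simp at this
        have hb2 : 0 < b ^ 2 := lt_of_le_of_ne (sq_nonneg b) (Ne.symm (pow_ne_zero 2 hb))
        rw [le_div_iff₀ hb2] at this
        nlinarith [sq_nonneg b]
      rw [hb0, ← ha0]
      simpa using mul_nonneg (le_of_eq rfl) hc
    · have hd : discrim a (2 * b) c ≤ 0 :=
        discrim_le_zero (by intro x; linarith [hq x])
      rw [discrim] at hd
      nlinarith
  have : b ≤ Real.sqrt (b ^ 2) := by
    rw [Real.sqrt_sq_eq_abs]; exact le_abs_self b
  calc b ≤ Real.sqrt (b ^ 2) := this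
    _ ≤ Real.sqrt (a * c) := Real.sqrt_le_sqrt hbsq
    _ = Real.sqrt a * Real.sqrt c := Real.sqrt_mul ha c
    _ = mnorm M u * mnorm M w := rfl

lemma mnorm_add_smul_le {d : ℕ} {M : Matrix (Fin d) (Fin d) ℝ} (hMs : M.IsSymm)
    (hM : M.PosDef) (w v : Fin d → ℝ) {s : ℝ} (hs : 0 ≤ s) :
    mnorm M (w + s • v) ≤ mnorm M w + s * mnorm M v := by
  have hA := mnorm_nonneg M w
  have hB := mnorm_nonneg M v
  have key : mprod M (w + s • v) (w + s • v) ≤ (mnorm M w + s * mnorm M v) ^ 2 := by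
    have e1 : mprod M (w + s • v) (w + s • v)
        = mprod M w w + 2 * s * mprod M w v + s ^ 2 * mprod M v v := by
      have := mprod_expand hMs w v 1 s
      simpa using this
    have cs := mprod_cs hMs hM w v
    rw [e1, ← mnorm_sq hM w, ← mnorm_sq hM v]
    nlinarith
  have h2 : mnorm M (w + s • v) ≤ Real.sqrt ((mnorm M w + s * mnorm M v) ^ 2) :=
    Real.sqrt_le_sqrt key
  rwa [Real.sqrt_sq (by positivity)] at h2

theorem stmt2 {d : ℕ} (M : Matrix (Fin d) (Fin d) ℝ) (hMs : M.IsSymm) (hM : M.PosDef)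
    (z v : Fin d → ℝ) (hz : z ≠ 0) (hv : v ≠ 0) (θ₀ : ℝ) (hθ0 : 0 ≤ θ₀) (hθ1 : θ₀ ≤ Real.pi / 2)
    (h : mprod M v (z - v) ≥ Real.cos θ₀ * mnorm M v * mnorm M (z - v)) :
    ∀ t : ℝ, 0 ≤ t → t ≤ 1 →
      mprod M v (z - t • v) ≥ Real.cos θ₀ * mnorm M v * mnorm M (z - t • v) := by
  intro t ht0 ht1
  set s : ℝ := 1 - t with hs
  have hs0 : 0 ≤ s := by linarith
  have hsplit : z - t • v = (z - v) + s • v := by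
    rw [hs, sub_smul, one_smul]; abel
  have hc0 : 0 ≤ Real.cos θ₀ :=
    Real.cos_nonneg_of_mem_Icc ⟨by linarith [Real.pi_pos], hθ1⟩
  have hc1 : Real.cos θ₀ ≤ 1 := Real.cos_le_one θ₀
  have hB := mnorm_nonneg M v
  have hA := mnorm_nonneg M (z - v)
  have hBsq : mnorm M v ^ 2 = mprod M v v := mnorm_sq hM v
  have hlhs : mprod M v (z - t • v) = mprod M v (z - v) + s * mprod M v v := by
    rw [hsplit, mprod_add_right, mprod_smul_right]
  have htri : mnorm M (z - t • v) ≤ mnorm M (z - v) + s * mnorm M v := by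
    rw [hsplit]; exact mnorm_add_smul_le hMs hM _ _ hs0
  have hmul : Real.cos θ₀ * mnorm M v * mnorm M (z - t • v)
      ≤ Real.cos θ₀ * mnorm M v * (mnorm M (z - v) + s * mnorm M v) :=
    mul_le_mul_of_nonneg_left htri (by positivity)
  have hdist : Real.cos θ₀ * mnorm M v * (mnorm M (z - v) + s * mnorm M v)
      = Real.cos θ₀ * mnorm M v * mnorm M (z - v)
        + s * (Real.cos θ₀ * (mnorm M v * mnorm M v)) := by ring
  have hcb2 : Real.cos θ₀ * (mnorm M v * mnorm M v) ≤ mnorm M v * mnorm M v :=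
    mul_le_of_le_one_left (mul_nonneg hB hB) hc1
  have hcb3 : s * (Real.cos θ₀ * (mnorm M v * mnorm M v)) ≤ s * mprod M v v := by
    have : mnorm M v * mnorm M v = mprod M v v := by rw [← hBsq]; ring
    rw [← this]
    exact mul_le_mul_of_nonneg_left hcb2 hs0
  rw [hlhs]
  linarith
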